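/- Let f be a finite expectation and let I be a finite expectation that harmonizes with f, is conditionally difference bounded, and satisfies that Φ_f(I) is finite. If s ∈ Σ is a state with finite expected looping time E_s[τ] < ∞, then Φ_fⁿ(I)(s) < ∞ for every n ∈ ℕ and lim_{n→∞} Φ_fⁿ(I)(s) = (lfp Φ_f)(s). -/

import Mathlib

open MeasureTheory Filter Topology
open scoped Classical ENNReal ENat NNReal

/-! Loop model: states `S`, guard `φ : Set S`, loop-body transition probabilities
`μ : S → S → ℝ≥0`. Expectations are functions `S → ℝ≥0∞` with the pointwise order. -/

variable {S : Type*}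

/-- One-step weakest preexpectation of the loop body:
`wpF μ X s = ∑_{s'} μ s s' * X s'`. -/
noncomputable def wpF (μ : S → S → ℝ≥0) (X : S → ℝ≥0∞) (s : S) : ℝ≥0∞ :=
  ∑' s', (μ s s' : ℝ≥0∞) * X s'

/-- The characteristic function `Φ_f` of the loop `while φ do C` with respect to the
postexpectation `f`. -/
noncomputable def Phi (φ : Set S) (μ : S → S → ℝ≥0) (f : S → ℝ≥0∞)
    (X : S → ℝ≥0∞) (s : S) : ℝ≥0∞ :=
  if s ∈ φ then wpF μ X s else f s

theorem Phi_mono (φ : Set S) (μ : S → S → ℝ≥0) (f : S → ℝ≥0∞) :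
    Monotone (Phi φ μ f) := by
  intro X Y h s
  unfold Phi wpF
  split_ifs with hs
  · exact ENNReal.tsum_le_tsum fun s' => mul_le_mul_right (h s') _
  · exact le_rfl

/-- Least fixed point of the characteristic function `Φ_f`,
i.e. the weakest preexpectation `wp(while φ do C)(f)`. -/
noncomputable def lfpPhi (φ : Set S) (μ : S → S → ℝ≥0) (f : S → ℝ≥0∞) : S → ℝ≥0∞ :=
  OrderHom.lfp ⟨Phi φ μ f, Phi_mono φ μ f⟩

/-- A finite expectation: `X s < ∞` for all states. -/
def FinExp (X : S → ℝ≥0∞) : Prop := ∀ s, X s < ⊤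

/-- A bounded expectation: `X s ≤ c` for some constant `c : ℝ≥0`. -/
def BddExp (X : S → ℝ≥0∞) : Prop := ∃ c : ℝ≥0, ∀ s, X s ≤ (c : ℝ≥0∞)

/-- `I` harmonizes with `f` if `I` agrees with `f` on all terminal states (states
outside the guard). -/
def Harmonizes (φ : Set S) (I f : S → ℝ≥0∞) : Prop := ∀ s ∉ φ, I s = f s

/-- `ΔI`: the expected change of `I` within one loop iteration. -/
noncomputable def dExp (φ : Set S) (μ : S → S → ℝ≥0) (I : S → ℝ≥0∞) (s : S) : ℝ≥0∞ :=
  if s ∈ φ then ∑' s', (μ s s' : ℝ≥0∞) * ((I s' - I s) ⊔ (I s - I s')) else 0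

/-- `I` is conditionally difference bounded if `ΔI` is bounded by a constant. -/
def CondDiffBdd (φ : Set S) (μ : S → S → ℝ≥0) (I : S → ℝ≥0∞) : Prop :=
  ∃ c : ℝ≥0, ∀ s, dExp φ μ I s ≤ (c : ℝ≥0∞)

/-! The loop space `Ω := ℕ → S` with its product σ-algebra (`S` discrete). -/

/-- The cylinder set of a finite sequence of states. -/
def Cyl (π : List S) : Set (ℕ → S) := {ϑ | ∀ i : Fin π.length, ϑ i = π.get i}

/-- The σ-algebra `F_n`, generated by the cylinder sets of sequences of length `n+1`. -/
def Fn (n : ℕ) : MeasurableSpace (ℕ → S) :=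
  MeasurableSpace.generateFrom {A | ∃ π : List S, π.length = n + 1 ∧ A = Cyl π}

/-- The shifted filtration `G_n := F_{n+1}`. -/
def Gn (n : ℕ) : MeasurableSpace (ℕ → S) := Fn (n + 1)

/-- One-step transition probability of the loop: from a state `a` inside the guard move
according to `μ`; a state outside the guard is absorbing. -/
noncomputable def stepP (φ : Set S) (μ : S → S → ℝ≥0) (a b : S) : ℝ≥0 :=
  if a ∈ φ then μ a b else if b = a then 1 else 0

/-- Product of the one-step transition probabilities along a finite sequence. -/
noncomputable def chainP (φ : Set S) (μ : S → S → ℝ≥0) : List S → ℝ≥0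
  | [] => 1
  | [_] => 1
  | a :: b :: rest => stepP φ μ a b * chainP φ μ (b :: rest)

/-- The prefix probability `p_s(π)` of the finite sequence `π` of states, starting the
loop in the state `s`. -/
noncomputable def prefP (φ : Set S) (μ : S → S → ℝ≥0) (s : S) (π : List S) : ℝ≥0 :=
  (if π.head? = some s then 1 else 0) * chainP φ μ π

/-- The looping time `τ`: the first time the run leaves the guard. -/
noncomputable def loopT (φ : Set S) (ϑ : ℕ → S) : ℕ∞ :=
  sInf {n : ℕ∞ | ∃ m : ℕ, n = (m : ℕ∞) ∧ ϑ m ∉ φ}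

/-- The stochastic process `X_n^{f,I}` induced by the invariant `I` (w.r.t. the
postexpectation `f`). -/
noncomputable def Xn (φ : Set S) (f I : S → ℝ≥0∞) (n : ℕ) (ϑ : ℕ → S) : ℝ≥0∞ :=
  if loopT φ ϑ ≤ (n : ℕ∞) then f (ϑ (loopT φ ϑ).toNat) else I (ϑ (n + 1))

/-- The stopped process `X_τ^f`. -/
noncomputable def Xstop (φ : Set S) (f : S → ℝ≥0∞) (ϑ : ℕ → S) : ℝ≥0∞ :=
  if loopT φ ϑ < ⊤ then f (ϑ (loopT φ ϑ).toNat) else 0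

/-!
`Φ_f` is affine with linear part `Φ_0`, so `Φ_fⁿ(I) = Φ_fⁿ(0) + Φ_0ⁿ(I)`, and the first summand
increases to `lfp Φ_f` by Kleene's theorem. The second one is an expectation over runs,
`Φ_0ⁿ(I)(s) = E_s[I(ϑ n); n ≤ τ]`. On the event `n ≤ τ` we have `I(ϑ n) ≤ I(s) + V`, where `V` is
the variation of `I` along the run up to `τ`; by the Markov property and conditional difference
boundedness `E_s[V] ≤ c · E_s[τ] < ∞`. Since also `P_s(n ≤ τ) → 0`, absolute continuity of the
integral gives `Φ_0ⁿ(I)(s) → 0`. Finiteness of the iterates is the cruder bound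
`Φ_fⁿ(I) ≤ I + n · c`.
-/

lemma ENNReal.tsum_coe_eq_one {α : Type*} {p : α → ℝ≥0} (hp : ∑' a, p a = 1) :
    ∑' a, (p a : ℝ≥0∞) = 1 := by
  have hsum : Summable p := by
    by_contra h
    simp [tsum_eq_zero_of_not_summable h] at hp
  rw [← ENNReal.coe_tsum hsum, hp, ENNReal.coe_one]

/-- `|I b - I a|`: truncated subtraction makes one of the two terms vanish. -/
noncomputable def absDiff (I : S → ℝ≥0∞) (a b : S) : ℝ≥0∞ := (I b - I a) ⊔ (I a - I b)

lemma le_add_absDiff (I : S → ℝ≥0∞) (a b : S) : I b ≤ I a + absDiff I a b :=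
  le_add_tsub.trans (add_le_add_right le_sup_left _)

section Iterates

variable {φ : Set S} {μ : S → S → ℝ≥0}

lemma wpF_add (X Y : S → ℝ≥0∞) : wpF μ (X + Y) = wpF μ X + wpF μ Y := by
  funext s
  simp only [wpF, Pi.add_apply, mul_add, ENNReal.tsum_add]

lemma wpF_const (hμ : ∀ s, ∑' s', μ s s' = 1) (r : ℝ≥0∞) (s : S) : wpF μ (fun _ => r) s = r := by
  rw [wpF, ENNReal.tsum_mul_right, ENNReal.tsum_coe_eq_one (hμ s), one_mul]

lemma Phi_add (f X Y : S → ℝ≥0∞) : Phi φ μ f (X + Y) = Phi φ μ f X + Phi φ μ 0 Y := by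
  funext s
  by_cases hs : s ∈ φ <;> simp [Phi, hs, wpF_add]

lemma Phi_iterate_eq_add (f X : S → ℝ≥0∞) (n : ℕ) :
    (Phi φ μ f)^[n] X = (Phi φ μ f)^[n] 0 + (Phi φ μ 0)^[n] X := by
  induction n with
  | zero => simp
  | succ n ih => simp only [Function.iterate_succ_apply', ih, Phi_add]

lemma Phi_zero_const_le (hμ : ∀ s, ∑' s', μ s s' = 1) (r : ℝ≥0∞) (s : S) :
    Phi φ μ 0 (fun _ => r) s ≤ r := by
  by_cases hs : s ∈ φ <;> simp [Phi, hs, wpF_const hμ]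

lemma wpF_le_add_dExp (hμ : ∀ s, ∑' s', μ s s' = 1) (I : S → ℝ≥0∞) {s : S} (hs : s ∈ φ) :
    wpF μ I s ≤ I s + dExp φ μ I s := by
  calc wpF μ I s ≤ wpF μ ((fun _ => I s) + absDiff I s) s :=
        ENNReal.tsum_le_tsum fun t => by gcongr; exact le_add_absDiff I s t
    _ = I s + dExp φ μ I s := by rw [wpF_add, Pi.add_apply, wpF_const hμ, dExp, if_pos hs]; rfl

lemma Phi_le_add_dExp (hμ : ∀ s, ∑' s', μ s s' = 1) {f I : S → ℝ≥0∞} (hharm : Harmonizes φ I f)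
    (s : S) : Phi φ μ f I s ≤ I s + dExp φ μ I s := by
  by_cases hs : s ∈ φ
  · simpa [Phi, hs] using wpF_le_add_dExp hμ I hs
  · simp [Phi, hs, ← hharm s hs]

lemma Phi_iterate_le (hμ : ∀ s, ∑' s', μ s s' = 1) {f I : S → ℝ≥0∞} (hharm : Harmonizes φ I f)
    {c : ℝ≥0} (hc : ∀ s, dExp φ μ I s ≤ c) (n : ℕ) (s : S) :
    (Phi φ μ f)^[n] I s ≤ I s + n * c := by
  induction n generalizing s with
  | zero => simp
  | succ n ih =>
    calc (Phi φ μ f)^[n + 1] I s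
        ≤ Phi φ μ f (I + fun _ => (n * c : ℝ≥0∞)) s := by
          rw [Function.iterate_succ_apply']; exact Phi_mono φ μ f ih s
      _ ≤ (I s + c) + n * c := by
          rw [Phi_add, Pi.add_apply]
          exact add_le_add ((Phi_le_add_dExp hμ hharm s).trans (add_le_add_right (hc s) _))
            (Phi_zero_const_le hμ _ s)
      _ = I s + (n + 1 : ℕ) * c := by push_cast; ring

end Iterates

section Kleene

open OmegaCompletePartialOrder

variable {φ : Set S} {μ : S → S → ℝ≥0}

lemma ENNReal.tsum_iSup_eq_iSup_tsum {α : Type*} {g : ℕ → α → ℝ≥0∞} (hg : Monotone g) :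
    ∑' a, ⨆ n, g n a = ⨆ n, ∑' a, g n a := by
  let _ : MeasurableSpace α := ⊤
  simp only [← lintegral_count]
  exact lintegral_iSup (fun n => .of_discrete) hg

lemma Phi_ωScottContinuous (f : S → ℝ≥0∞) : ωScottContinuous (Phi φ μ f) := by
  refine ωScottContinuous.of_monotone_map_ωSup ⟨Phi_mono φ μ f, fun c => ?_⟩
  funext s
  show _ = ⨆ n, Phi φ μ f (c n) s
  by_cases hs : s ∈ φ
  · simp only [Phi, hs, if_true, wpF]
    change ∑' t, (μ s t : ℝ≥0∞) * ⨆ n, c n t = _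
    simp_rw [ENNReal.mul_iSup]
    exact ENNReal.tsum_iSup_eq_iSup_tsum fun m n hmn t => by gcongr; exact c.monotone hmn t
  · simp [Phi, hs]

lemma lfpPhi_eq_iSup_iterate (f : S → ℝ≥0∞) : lfpPhi φ μ f = ⨆ n, (Phi φ μ f)^[n] 0 :=
  fixedPoints.lfp_eq_sSup_iterate _ (Phi_ωScottContinuous f)

lemma tendsto_Phi_iterate_zero_lfpPhi (f : S → ℝ≥0∞) (s : S) :
    Tendsto (fun n => (Phi φ μ f)^[n] 0 s) atTop (𝓝 (lfpPhi φ μ f s)) := by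
  rw [lfpPhi_eq_iSup_iterate, iSup_apply]
  exact tendsto_atTop_iSup fun m n hmn =>
    (Phi_mono φ μ f).monotone_iterate_of_le_map zero_le hmn s

end Kleene

section PathSpace

variable (φ : Set S) (μ : S → S → ℝ≥0)

lemma chainP_append_singleton {π : List S} (hπ : π ≠ []) (b : S) :
    chainP φ μ (π ++ [b]) = chainP φ μ π * stepP φ μ (π.getLast hπ) b := by
  induction π with
  | nil => exact absurd rfl hπ
  | cons a rest ih =>
    cases rest with
    | nil => simp [chainP]
    | cons c r =>
      have ih := ih (List.cons_ne_nil c r)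
      rw [List.cons_append] at ih
      simp only [List.cons_append, chainP, ih, List.getLast_cons (List.cons_ne_nil c r), mul_assoc]

lemma prefP_ofFn_snoc (s : S) {n : ℕ} (u : Fin (n + 1) → S) (t : S) :
    prefP φ μ s (List.ofFn (Fin.snoc u t : Fin (n + 2) → S))
      = prefP φ μ s (List.ofFn u) * stepP φ μ (u (Fin.last n)) t := by
  have hne : List.ofFn u ≠ [] := by simp
  have hsnoc : List.ofFn (Fin.snoc u t : Fin (n + 2) → S) = List.ofFn u ++ [t] := by
    rw [List.ofFn_succ', List.concat_eq_append]
    simp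
  rw [hsnoc, prefP, prefP, chainP_append_singleton φ μ hne, List.head?_append_of_ne_nil _ hne,
    List.getLast_ofFn, mul_assoc]
  rfl

lemma Cyl_ofFn {n : ℕ} (u : Fin n → S) :
    Cyl (List.ofFn u) = (fun (ϑ : ℕ → S) (i : Fin n) => ϑ i) ⁻¹' {u} := by
  ext ϑ
  simp [Cyl, funext_iff, Fin.forall_iff]

end PathSpace

section GuardSet

variable {φ : Set S}

/-- The event `n ≤ τ`. -/
def guardSet (φ : Set S) (n : ℕ) : Set (ℕ → S) := {ϑ | ∀ i < n, ϑ i ∈ φ}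

@[simp] lemma guardSet_zero : guardSet φ 0 = Set.univ := by simp [guardSet]

lemma guardSet_succ (n : ℕ) : guardSet φ (n + 1) = guardSet φ n ∩ {ϑ | ϑ n ∈ φ} := by
  ext ϑ
  simp [guardSet, Nat.le_iff_lt_or_eq, or_imp, forall_and]

lemma guardSet_antitone : Antitone (guardSet φ) :=
  fun _ _ hmn _ hϑ i hi => hϑ i (hi.trans_le hmn)

lemma measurableSet_guardSet [MeasurableSpace S] [DiscreteMeasurableSpace S] (n : ℕ) :
    MeasurableSet (guardSet φ n) := by
  induction n with
  | zero => simp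
  | succ n ih =>
    rw [guardSet_succ]
    exact ih.inter (measurableSet_preimage (measurable_pi_apply n) .of_discrete)

lemma le_loopT_of_mem_guardSet {n : ℕ} {ϑ : ℕ → S} (hϑ : ϑ ∈ guardSet φ n) :
    (n : ℕ∞) ≤ loopT φ ϑ := by
  refine le_sInf ?_
  rintro _ ⟨m, rfl, hm⟩
  exact_mod_cast not_lt.1 fun hmn => hm (hϑ m hmn)

lemma tsum_indicator_guardSet_succ_le (ϑ : ℕ → S) :
    ∑' k, (guardSet φ (k + 1)).indicator 1 ϑ ≤ (loopT φ ϑ : ℝ≥0∞) := by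
  cases hτ : loopT φ ϑ using ENat.recTopCoe with
  | top => simp
  | coe m =>
    have hvanish : ∀ k ∉ Finset.range m,
        (guardSet φ (k + 1)).indicator (1 : (ℕ → S) → ℝ≥0∞) ϑ = 0 := by
      refine fun k hk => Set.indicator_of_notMem (fun hmem => hk ?_) _
      have := le_loopT_of_mem_guardSet hmem
      rw [hτ] at this
      exact Finset.mem_range.2 (by exact_mod_cast this)
    calc ∑' k, (guardSet φ (k + 1)).indicator (1 : (ℕ → S) → ℝ≥0∞) ϑ
        = ∑ k ∈ Finset.range m, (guardSet φ (k + 1)).indicator 1 ϑ := tsum_eq_sum hvanish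
      _ ≤ ∑ k ∈ Finset.range m, (1 : ℝ≥0∞) :=
          Finset.sum_le_sum fun k _ => Set.indicator_le_self _ _ ϑ
      _ = ((m : ℕ∞) : ℝ≥0∞) := by simp

lemma tsum_measure_guardSet_succ_le [MeasurableSpace S] [DiscreteMeasurableSpace S]
    (P : Measure (ℕ → S)) :
    ∑' k, P (guardSet φ (k + 1)) ≤ ∫⁻ ϑ, (loopT φ ϑ : ℝ≥0∞) ∂P := by
  calc ∑' k, P (guardSet φ (k + 1))
      = ∫⁻ ϑ, ∑' k, (guardSet φ (k + 1)).indicator 1 ϑ ∂P := by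
        rw [lintegral_tsum fun k =>
          (measurable_one.indicator (measurableSet_guardSet _)).aemeasurable]
        simp [lintegral_indicator_one (measurableSet_guardSet _)]
    _ ≤ _ := lintegral_mono tsum_indicator_guardSet_succ_le

noncomputable def stoppedVariation (φ : Set S) (I : S → ℝ≥0∞) (ϑ : ℕ → S) : ℝ≥0∞ :=
  ∑' k, (guardSet φ (k + 1)).indicator (fun ϑ => absDiff I (ϑ k) (ϑ (k + 1))) ϑ

lemma le_add_stoppedVariation (I : S → ℝ≥0∞) {n : ℕ} {ϑ : ℕ → S} (hϑ : ϑ ∈ guardSet φ n) :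
    I (ϑ n) ≤ I (ϑ 0) + stoppedVariation φ I ϑ := by
  have htelescope : ∀ m,
      I (ϑ m) ≤ I (ϑ 0) + ∑ k ∈ Finset.range m, absDiff I (ϑ k) (ϑ (k + 1)) := by
    intro m
    induction m with
    | zero => simp
    | succ m ih =>
      rw [Finset.sum_range_succ, ← add_assoc]
      exact (le_add_absDiff I _ _).trans (add_le_add_left ih _)
  refine (htelescope n).trans (add_le_add_right ?_ _)
  calc ∑ k ∈ Finset.range n, absDiff I (ϑ k) (ϑ (k + 1))
      = ∑ k ∈ Finset.range n,
          (guardSet φ (k + 1)).indicator (fun ϑ => absDiff I (ϑ k) (ϑ (k + 1))) ϑ :=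
        Finset.sum_congr rfl fun k hk => (Set.indicator_of_mem
          (guardSet_antitone (Finset.mem_range.1 hk) hϑ)
          (fun ϑ : ℕ → S => absDiff I (ϑ k) (ϑ (k + 1)))).symm
    _ ≤ stoppedVariation φ I ϑ := ENNReal.sum_le_tsum _

end GuardSet

/-- `P` is the path measure `P_s` of the loop started in `s`. -/
def IsLoopMeasure [MeasurableSpace S] (φ : Set S) (μ : S → S → ℝ≥0) (s : S)
    (P : Measure (ℕ → S)) : Prop :=
  ∀ π : List S, π ≠ [] → P (Cyl π) = prefP φ μ s π

section LoopMeasure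

variable {φ : Set S} {μ : S → S → ℝ≥0} [Countable S] [MeasurableSpace S]
  [DiscreteMeasurableSpace S] {P : Measure (ℕ → S)} {s : S}

lemma lintegral_comp_restrict (hP : IsLoopMeasure φ μ s P) {n : ℕ}
    (g : (Fin (n + 1) → S) → ℝ≥0∞) :
    ∫⁻ ϑ, g (fun i => ϑ i) ∂P = ∑' u, (prefP φ μ s (List.ofFn u) : ℝ≥0∞) * g u := by
  have hrestrict : Measurable fun (ϑ : ℕ → S) (i : Fin (n + 1)) => ϑ i := by fun_prop
  rw [← lintegral_map (.of_discrete) hrestrict, lintegral_countable']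
  refine tsum_congr fun u => ?_
  rw [Measure.map_apply hrestrict (measurableSet_singleton u), ← Cyl_ofFn, hP _ (by simp),
    mul_comm]

lemma lintegral_comp_zero (hP : IsLoopMeasure φ μ s P) (X : S → ℝ≥0∞) :
    ∫⁻ ϑ, X (ϑ 0) ∂P = X s := by
  refine (lintegral_comp_restrict hP (n := 0) fun u => X (u 0)).trans ?_
  rw [← (Equiv.funUnique (Fin 1) S).symm.tsum_eq, tsum_eq_single s]
  · simp [prefP, chainP]
  · intro a ha
    simp [prefP, chainP, ha]

lemma ae_eq_start (hP : IsLoopMeasure φ μ s P) : ∀ᵐ ϑ ∂P, ϑ 0 = s := by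
  have hzero := lintegral_comp_zero hP (({s}ᶜ : Set S).indicator 1)
  rw [Set.indicator_of_notMem (by simp)] at hzero
  filter_upwards [(lintegral_eq_zero_iff (by fun_prop)).1 hzero] with ϑ hϑ
  by_contra h
  simp [Set.indicator_of_mem (show ϑ 0 ∈ ({s}ᶜ : Set S) from h)] at hϑ

/-- The Markov property of the path measure, one step after time `n`. -/
lemma lintegral_mul_step (hP : IsLoopMeasure φ μ s P) {n : ℕ}
    {h : (ℕ → S) → ℝ≥0∞} (hh : ∀ ϑ ϑ', (∀ i ≤ n, ϑ i = ϑ' i) → h ϑ = h ϑ')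
    (G : S → S → ℝ≥0∞) :
    ∫⁻ ϑ, h ϑ * G (ϑ n) (ϑ (n + 1)) ∂P
      = ∫⁻ ϑ, h ϑ * ∑' t, (stepP φ μ (ϑ n) t : ℝ≥0∞) * G (ϑ n) t ∂P := by
  set g : (Fin (n + 1) → S) → ℝ≥0∞ := fun u => h fun k => u ⟨min k n, by omega⟩
  have hg : ∀ ϑ : ℕ → S, h ϑ = g fun i => ϑ i :=
    fun ϑ => hh _ _ fun i hi => by simp [min_eq_left hi]
  set g' : (Fin (n + 2) → S) → ℝ≥0∞ :=
    fun u => g (Fin.init u) * G (u (Fin.last n).castSucc) (u (Fin.last (n + 1)))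
  set g'' : (Fin (n + 1) → S) → ℝ≥0∞ :=
    fun u => g u * ∑' t, (stepP φ μ (u (Fin.last n)) t : ℝ≥0∞) * G (u (Fin.last n)) t
  calc ∫⁻ ϑ, h ϑ * G (ϑ n) (ϑ (n + 1)) ∂P = ∫⁻ ϑ, g' (fun i => ϑ i) ∂P := by
        simp only [hg]; rfl
    _ = ∑' u, (prefP φ μ s (List.ofFn u) : ℝ≥0∞) * g'' u := by
        refine (lintegral_comp_restrict hP g').trans ?_
        rw [← (Fin.snocEquiv fun _ => S).tsum_eq, ENNReal.tsum_prod', ENNReal.tsum_comm]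
        refine tsum_congr fun u => ?_
        dsimp only [g'']
        rw [← ENNReal.tsum_mul_left, ← ENNReal.tsum_mul_left]
        refine tsum_congr fun t => ?_
        change (prefP φ μ s (List.ofFn (Fin.snoc u t : Fin (n + 2) → S)) : ℝ≥0∞) *
          g' (Fin.snoc u t) = _
        dsimp only [g']
        rw [prefP_ofFn_snoc, Fin.init_snoc, Fin.snoc_castSucc, Fin.snoc_last]
        push_cast
        ring
    _ = ∫⁻ ϑ, g'' (fun i => ϑ i) ∂P := (lintegral_comp_restrict hP g'').symm
    _ = _ := by simp only [hg]; rfl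

lemma setLIntegral_guardSet_succ (hP : IsLoopMeasure φ μ s P) (n : ℕ) (G : S → S → ℝ≥0∞) :
    ∫⁻ ϑ in guardSet φ (n + 1), G (ϑ n) (ϑ (n + 1)) ∂P
      = ∫⁻ ϑ in guardSet φ n, Phi φ μ 0 (G (ϑ n)) (ϑ n) ∂P := by
  have hguard : ∀ ϑ ϑ' : ℕ → S, (∀ i ≤ n, ϑ i = ϑ' i) →
      (guardSet φ n).indicator 1 ϑ = (guardSet φ n).indicator (1 : (ℕ → S) → ℝ≥0∞) ϑ' := by
    intro ϑ ϑ' h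
    have hmem : ϑ ∈ guardSet φ n ↔ ϑ' ∈ guardSet φ n :=
      forall₂_congr fun i hi => by rw [h i hi.le]
    simp only [Set.indicator_apply, hmem, Pi.one_apply]
  have hstep : ∀ a, ∑' t, (stepP φ μ a t : ℝ≥0∞) * (if a ∈ φ then G a t else 0)
      = Phi φ μ 0 (G a) a := by
    intro a
    by_cases ha : a ∈ φ <;> simp [Phi, wpF, stepP, ha]
  rw [← lintegral_indicator (measurableSet_guardSet _),
    ← lintegral_indicator (measurableSet_guardSet _)]
  calc ∫⁻ ϑ, (guardSet φ (n + 1)).indicator (fun ϑ => G (ϑ n) (ϑ (n + 1))) ϑ ∂P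
      = ∫⁻ ϑ, (guardSet φ n).indicator 1 ϑ *
          (if ϑ n ∈ φ then G (ϑ n) (ϑ (n + 1)) else 0) ∂P := by
        congr with ϑ
        by_cases h₁ : ϑ ∈ guardSet φ n <;> by_cases h₂ : ϑ n ∈ φ <;>
          simp [guardSet_succ, h₁, h₂]
    _ = ∫⁻ ϑ, (guardSet φ n).indicator 1 ϑ *
          ∑' t, (stepP φ μ (ϑ n) t : ℝ≥0∞) * (if ϑ n ∈ φ then G (ϑ n) t else 0) ∂P :=
        lintegral_mul_step hP hguard fun a b => if a ∈ φ then G a b else 0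
    _ = ∫⁻ ϑ, (guardSet φ n).indicator (fun ϑ => Phi φ μ 0 (G (ϑ n)) (ϑ n)) ϑ ∂P := by
        simp only [hstep]
        congr with ϑ
        by_cases h₁ : ϑ ∈ guardSet φ n <;> simp [h₁]

lemma Phi_zero_iterate_eq_setLIntegral (hP : IsLoopMeasure φ μ s P) (X : S → ℝ≥0∞) (n : ℕ) :
    (Phi φ μ 0)^[n] X s = ∫⁻ ϑ in guardSet φ n, X (ϑ n) ∂P := by
  induction n generalizing X with
  | zero => simp [lintegral_comp_zero hP]
  | succ n ih =>
    rw [Function.iterate_succ_apply, ih, setLIntegral_guardSet_succ hP n fun _ => X]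

lemma setLIntegral_absDiff_le (hP : IsLoopMeasure φ μ s P)
    {I : S → ℝ≥0∞} {c : ℝ≥0} (hc : ∀ s, dExp φ μ I s ≤ c) (k : ℕ) :
    ∫⁻ ϑ in guardSet φ (k + 1), absDiff I (ϑ k) (ϑ (k + 1)) ∂P ≤ c * P (guardSet φ (k + 1)) := by
  have hdExp : ∀ a, dExp φ μ I a ≤ φ.indicator (fun _ => (c : ℝ≥0∞)) a := by
    intro a
    by_cases ha : a ∈ φ
    · simpa [ha] using hc a
    · simp [dExp, ha]
  rw [setLIntegral_guardSet_succ hP k (absDiff I)]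
  calc ∫⁻ ϑ in guardSet φ k, dExp φ μ I (ϑ k) ∂P
      ≤ ∫⁻ ϑ in guardSet φ k, {ϑ : ℕ → S | ϑ k ∈ φ}.indicator (fun _ => (c : ℝ≥0∞)) ϑ ∂P :=
        lintegral_mono fun ϑ => hdExp (ϑ k)
    _ = c * P (guardSet φ (k + 1)) := by
        rw [setLIntegral_indicator (show MeasurableSet {ϑ : ℕ → S | ϑ k ∈ φ} from
            measurable_pi_apply k MeasurableSet.of_discrete),
          setLIntegral_const, guardSet_succ, Set.inter_comm]

lemma lintegral_stoppedVariation_le (hP : IsLoopMeasure φ μ s P)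
    {I : S → ℝ≥0∞} {c : ℝ≥0} (hc : ∀ s, dExp φ μ I s ≤ c) :
    ∫⁻ ϑ, stoppedVariation φ I ϑ ∂P ≤ c * ∫⁻ ϑ, (loopT φ ϑ : ℝ≥0∞) ∂P := by
  calc ∫⁻ ϑ, stoppedVariation φ I ϑ ∂P
      = ∑' k, ∫⁻ ϑ in guardSet φ (k + 1), absDiff I (ϑ k) (ϑ (k + 1)) ∂P := by
        have hmeas : ∀ k, Measurable fun ϑ : ℕ → S => absDiff I (ϑ k) (ϑ (k + 1)) := fun k =>
          (Measurable.of_discrete.comp ((measurable_pi_apply k).prodMk (measurable_pi_apply _)) :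
            Measurable ((fun p : S × S => absDiff I p.1 p.2) ∘ fun ϑ : ℕ → S => (ϑ k, ϑ (k + 1))))
        unfold stoppedVariation
        rw [lintegral_tsum fun k => ((hmeas k).indicator (measurableSet_guardSet _)).aemeasurable]
        simp only [lintegral_indicator (measurableSet_guardSet _)]
    _ ≤ ∑' k, c * P (guardSet φ (k + 1)) :=
        ENNReal.tsum_le_tsum fun k => setLIntegral_absDiff_le hP hc k
    _ ≤ c * ∫⁻ ϑ, (loopT φ ϑ : ℝ≥0∞) ∂P := by
        rw [ENNReal.tsum_mul_left]
        gcongr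
        exact tsum_measure_guardSet_succ_le P

lemma tendsto_Phi_zero_iterate_nhds_zero (hP : IsLoopMeasure φ μ s P)
    {I : S → ℝ≥0∞} (hIs : I s ≠ ⊤) {c : ℝ≥0} (hc : ∀ s, dExp φ μ I s ≤ c)
    (hτ : ∫⁻ ϑ, (loopT φ ϑ : ℝ≥0∞) ∂P ≠ ⊤) :
    Tendsto (fun n => (Phi φ μ 0)^[n] I s) atTop (𝓝 0) := by
  have hbound : ∀ n, (Phi φ μ 0)^[n] I s
      ≤ I s * P (guardSet φ n) + ∫⁻ ϑ in guardSet φ n, stoppedVariation φ I ϑ ∂P := by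
    intro n
    rw [Phi_zero_iterate_eq_setLIntegral hP, ← setLIntegral_const,
      ← lintegral_add_left measurable_const]
    refine setLIntegral_mono_ae' (measurableSet_guardSet n) ?_
    filter_upwards [ae_eq_start hP] with ϑ hstart hϑ
    exact hstart ▸ le_add_stoppedVariation I hϑ
  have hvar : ∫⁻ ϑ, stoppedVariation φ I ϑ ∂P ≠ ⊤ :=
    ((lintegral_stoppedVariation_le hP hc).trans_lt
      (ENNReal.mul_lt_top ENNReal.coe_lt_top hτ.lt_top)).ne
  have hguard : Tendsto (fun n => P (guardSet φ n)) atTop (𝓝 0) :=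
    (tendsto_add_atTop_iff_nat 1).1 <| ENNReal.tendsto_atTop_zero_of_tsum_ne_top
      (ne_top_of_le_ne_top hτ (tsum_measure_guardSet_succ_le P))
  have hlim := (ENNReal.Tendsto.const_mul hguard (.inr hIs)).add
    (tendsto_setLIntegral_zero hvar hguard)
  rw [mul_zero, add_zero] at hlim
  exact tendsto_of_tendsto_of_tendsto_of_le_of_le tendsto_const_nhds hlim (fun _ => zero_le) hbound

end LoopMeasure

theorem ui_at_state_of_cdb_general {S : Type*} [Countable S] [MeasurableSpace S] [DiscreteMeasurableSpace S]
    (φ : Set S) (μ : S → S → ℝ≥0) (hμ : ∀ s, ∑' s', μ s s' = 1)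
    (P : S → Measure (ℕ → S))
    (hPC : ∀ (s : S) (π : List S), π ≠ [] → P s (Cyl π) = (prefP φ μ s π : ℝ≥0∞))
    (f I : S → ℝ≥0∞) (hI : FinExp I)
    (hharm : Harmonizes φ I f) (hcdb : CondDiffBdd φ μ I)
    (s : S) (hτs : ∫⁻ ϑ, (loopT φ ϑ : ℝ≥0∞) ∂(P s) < ⊤) :
    (∀ n : ℕ, (Phi φ μ f)^[n] I s < ⊤) ∧
    Tendsto (fun n => (Phi φ μ f)^[n] I s) atTop (nhds (lfpPhi φ μ f s)) := by
  obtain ⟨c, hc⟩ := hcdb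
  refine ⟨fun n => (Phi_iterate_le hμ hharm hc n s).trans_lt ?_, ?_⟩
  · have := hI s
    finiteness
  · simp_rw [Phi_iterate_eq_add f I, Pi.add_apply]
    simpa using (tendsto_Phi_iterate_zero_lfpPhi f s).add
      (tendsto_Phi_zero_iterate_nhds_zero (hPC s) (hI s).ne hc hτs.ne)

/-- **Uniform integrability at a state with finite expected looping time.** If the finite
expectation `I` harmonizes with the finite `f`, is conditionally difference bounded, and
`Φ_f(I)` is finite, then at every state `s` with `E_s[τ] < ∞` all iterates `Φ_fⁿ(I)(s)`
are finite and converge to `(lfp Φ_f)(s)`. -/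
theorem ui_at_state_of_cdb {S : Type*} [Countable S] [MeasurableSpace S] [DiscreteMeasurableSpace S]
    (φ : Set S) (μ : S → S → ℝ≥0) (hμ : ∀ s, ∑' s', μ s s' = 1)
    (P : S → Measure (ℕ → S)) (hP : ∀ s, IsProbabilityMeasure (P s))
    (hPC : ∀ (s : S) (π : List S), π ≠ [] → P s (Cyl π) = (prefP φ μ s π : ℝ≥0∞))
    (f I : S → ℝ≥0∞) (hf : FinExp f) (hI : FinExp I)
    (hharm : Harmonizes φ I f) (hcdb : CondDiffBdd φ μ I)
    (hPhiI : FinExp (Phi φ μ f I))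
    (s : S) (hτs : ∫⁻ ϑ, (loopT φ ϑ : ℝ≥0∞) ∂(P s) < ⊤) :
    (∀ n : ℕ, (Phi φ μ f)^[n] I s < ⊤) ∧
    Tendsto (fun n => (Phi φ μ f)^[n] I s) atTop (nhds (lfpPhi φ μ f s)) :=
  ui_at_state_of_cdb_general φ μ hμ P hPC f I hI hharm hcdb s hτs
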